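/- arXiv:1604.07634 — 2 statements merged into one kernel-verified Lean document; each statement's English description precedes it below -/
import Mathlib

section
/- Let P and Q be integer polynomials such that the one-sided limit lim_{t→0+} P(t)/Q(t) exists. Let η = 1/k for a positive integer k and suppose ‖P‖_∞ ≤ M and ‖Q‖_∞ ≤ M, where ‖·‖_∞ denotes the maximum magnitude of a coefficient. Then |P(t)/Q(t) − lim_{t→0+} P(t)/Q(t)| < η whenever 0 < t ≤ t0 = (6kM²)^{−1}. -/
set_option maxHeartbeats 1000000

open Filter Polynomial Finset

namespace Paper

lemma geom_bound' {t : ℝ} (h0 : 0 ≤ t) (h1 : t < 1) (n : ℕ) :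
    ∑ i ∈ Finset.range n, t ^ i ≤ (1 - t)⁻¹ := by
  have h1t : (0:ℝ) < 1 - t := by linarith
  rw [inv_eq_one_div, le_div_iff₀ h1t]
  have h := geom_sum_mul t n
  have ht : (0:ℝ) ≤ t ^ n := pow_nonneg h0 n
  nlinarith [h]

lemma tail_bound' (R : Polynomial ℤ) {M t : ℝ}
    (hM : ∀ i, |(R.coeff i : ℝ)| ≤ M) (h0 : 0 ≤ t) (h1 : t < 1) :
    |(aeval t R : ℝ) - R.coeff 0| ≤ M * t * (1 - t)⁻¹ := by
  have hM0 : 0 ≤ M := le_trans (abs_nonneg _) (hM 0)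
  rw [Polynomial.aeval_eq_sum_range, Finset.sum_range_succ']
  simp only [zsmul_eq_mul, pow_zero, mul_one, add_sub_cancel_right]
  calc |∑ i ∈ range R.natDegree, (R.coeff (i+1) : ℝ) * t ^ (i+1)|
      ≤ ∑ i ∈ range R.natDegree, |(R.coeff (i+1) : ℝ) * t ^ (i+1)| :=
        Finset.abs_sum_le_sum_abs _ _
    _ ≤ ∑ i ∈ range R.natDegree, M * (t * t ^ i) := by
        apply Finset.sum_le_sum; intro i _
        rw [abs_mul, abs_pow, abs_of_nonneg h0, pow_succ']
        exact mul_le_mul (hM _) le_rfl (by positivity) hM0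
    _ = M * t * ∑ i ∈ range R.natDegree, t ^ i := by
        rw [Finset.mul_sum]; apply Finset.sum_congr rfl; intro i _; ring
    _ ≤ M * t * (1-t)⁻¹ := by
        apply mul_le_mul_of_nonneg_left (geom_bound' h0 h1 _) (by positivity)

lemma factor' (R : Polynomial ℤ) (hR : R ≠ 0) :
    ∃ (b : ℕ) (R₁ : Polynomial ℤ), R = X ^ b * R₁ ∧ R₁.coeff 0 ≠ 0 ∧
      ∀ i, R₁.coeff i = R.coeff (b + i) := by
  have hdvd : (X : Polynomial ℤ) ^ R.natTrailingDegree ∣ R := by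
    rw [Polynomial.X_pow_dvd_iff]
    exact fun d hd => Polynomial.coeff_eq_zero_of_lt_natTrailingDegree hd
  obtain ⟨R₁, hR₁⟩ := hdvd
  have hcoeff : ∀ i, R₁.coeff i = R.coeff (R.natTrailingDegree + i) := by
    intro i
    have h := Polynomial.coeff_X_pow_mul R₁ R.natTrailingDegree i
    rw [← hR₁] at h
    rw [add_comm]
    exact h.symm
  refine ⟨R.natTrailingDegree, R₁, hR₁, ?_, hcoeff⟩
  rw [hcoeff 0]
  simpa using Polynomial.trailingCoeff_nonzero_iff_nonzero.mpr hR

lemma estimates' (R₁ : Polynomial ℤ) {M t : ℝ}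
    (hM : ∀ i, |(R₁.coeff i : ℝ)| ≤ M) (hM1 : 1 ≤ M)
    (h0 : 0 < t) (ht : M * t ≤ 1/6) (hc0 : R₁.coeff 0 ≠ 0) :
    |(aeval t R₁ : ℝ) - R₁.coeff 0| ≤ 6/5 * (M * t) ∧
    4/5 ≤ |(aeval t R₁ : ℝ)| ∧ |(aeval t R₁ : ℝ)| ≤ 6/5 * M := by
  have ht6 : t ≤ 1/6 := by nlinarith
  have h1 : t < 1 := by linarith
  have hinv : (1 - t)⁻¹ ≤ 6/5 := by
    rw [inv_le_comm₀ (by linarith) (by norm_num)]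
    linarith
  have htb := tail_bound' R₁ hM h0.le h1
  have hMt0 : 0 ≤ M * t := by positivity
  have h1' : |(aeval t R₁ : ℝ) - R₁.coeff 0| ≤ 6/5 * (M * t) := by
    calc |(aeval t R₁ : ℝ) - R₁.coeff 0| ≤ M * t * (1-t)⁻¹ := htb
      _ ≤ M * t * (6/5) := by apply mul_le_mul_of_nonneg_left hinv hMt0
      _ = 6/5 * (M * t) := by ring
  have hsmall : 6/5 * (M * t) ≤ 1/5 := by linarith
  have hc1 : (1:ℝ) ≤ |(R₁.coeff 0 : ℝ)| := by
    rw [← Int.cast_abs]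
    exact_mod_cast Int.one_le_abs hc0
  have hcM : |(R₁.coeff 0 : ℝ)| ≤ M := hM 0
  have habs := abs_sub_abs_le_abs_sub (aeval t R₁ : ℝ) (R₁.coeff 0 : ℝ)
  have habs2 := abs_sub_abs_le_abs_sub (R₁.coeff 0 : ℝ) (aeval t R₁ : ℝ)
  rw [abs_sub_comm] at habs2
  exact ⟨h1', by linarith, by linarith⟩

lemma aeval_tendsto' (R : Polynomial ℤ) :
    Tendsto (fun t : ℝ => (aeval t R : ℝ)) (nhdsWithin 0 (Set.Ioi 0)) (nhds (R.coeff 0 : ℝ)) := by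
  have h := (R.continuous_aeval.tendsto (0:ℝ)).mono_left (nhdsWithin_le_nhds (s := Set.Ioi 0))
  simpa [aeval_def, eval₂_eq_eval_map, ← Polynomial.coeff_zero_eq_eval_zero] using h

/-- Let `P` and `Q` be integer polynomials (`Q` not
identically zero) such that the one-sided limit `lim_{t→0⁺} P(t)/Q(t)` exists
(with value `L`).  Let `η = 1/k` for a positive integer `k` and suppose all
coefficients of `P` and of `Q` have absolute value at most `M`.  Then
`|P(t)/Q(t) - L| < η` whenever `0 < t ≤ t0 = (6 k M²)⁻¹`. -/
theorem stmt16 (P Q : Polynomial ℤ) (hQ : Q ≠ 0) (L : ℝ)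
    (hlim : Tendsto (fun t : ℝ => (aeval t P : ℝ) / (aeval t Q : ℝ))
      (nhdsWithin 0 (Set.Ioi 0)) (nhds L))
    (k : ℕ) (hk : 0 < k) (M : ℝ)
    (hPM : ∀ i, |(P.coeff i : ℝ)| ≤ M) (hQM : ∀ i, |(Q.coeff i : ℝ)| ≤ M) :
    ∀ t : ℝ, 0 < t → t ≤ (6 * k * M ^ 2)⁻¹ →
      |(aeval t P : ℝ) / (aeval t Q : ℝ) - L| < 1 / k := by
  have hk1 : (1:ℝ) ≤ (k:ℝ) := by exact_mod_cast hk
  have hk0 : (0:ℝ) < (k:ℝ) := by linarith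
  -- factor Q
  obtain ⟨b, Q₁, hQf, hq0, hQc⟩ := factor' Q hQ
  have hQ₁M : ∀ i, |(Q₁.coeff i : ℝ)| ≤ M := fun i => by rw [hQc i]; exact hQM _
  have hM1 : (1:ℝ) ≤ M := by
    have h1 : (1:ℝ) ≤ |(Q₁.coeff 0 : ℝ)| := by
      rw [← Int.cast_abs]; exact_mod_cast Int.one_le_abs hq0
    exact le_trans h1 (hQ₁M 0)
  have hM0 : (0:ℝ) < M := by linarith
  rcases eq_or_ne P 0 with rfl | hP
  · -- P = 0
    simp only [map_zero, zero_div] at hlim ⊢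
    have hL : L = 0 := tendsto_nhds_unique hlim tendsto_const_nhds
    intro t _ _
    rw [hL]
    simp
    positivity
  -- factor P
  obtain ⟨a, P₁, hPf, hp0, hPc⟩ := factor' P hP
  have hP₁M : ∀ i, |(P₁.coeff i : ℝ)| ≤ M := fun i => by rw [hPc i]; exact hPM _
  -- evaluation factorizations
  have hPev : ∀ t : ℝ, (aeval t P : ℝ) = t ^ a * aeval t P₁ := by
    intro t; rw [hPf, map_mul, map_pow, aeval_X]
  have hQev : ∀ t : ℝ, (aeval t Q : ℝ) = t ^ b * aeval t Q₁ := by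
    intro t; rw [hQf, map_mul, map_pow, aeval_X]
  -- per-t arithmetic facts
  have htfacts : ∀ t : ℝ, 0 < t → t ≤ (6 * k * M ^ 2)⁻¹ →
      M * t ≤ 1/6 ∧ M ^ 2 * t * k ≤ 1/6 := by
    intro t ht0 ht
    have h6 : (0:ℝ) < 6 * k * M ^ 2 := by positivity
    have h1 : t * (6 * k * M ^ 2) ≤ 1 := by
      calc t * (6 * k * M ^ 2) ≤ (6 * k * M ^ 2)⁻¹ * (6 * k * M ^ 2) :=
            mul_le_mul_of_nonneg_right ht h6.le
        _ = 1 := inv_mul_cancel₀ h6.ne'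
    constructor
    · nlinarith
    · nlinarith
  rcases lt_trichotomy a b with hab | hab | hab
  · -- a < b : contradiction with existence of the limit
    exfalso
    set c := b - a with hc
    have hbc : b = a + c := by omega
    have hc1 : 1 ≤ c := by omega
    have h1 : ∀ᶠ x in nhdsWithin 0 (Set.Ioi 0),
        |(aeval x P : ℝ) / (aeval x Q : ℝ) - L| < 1 := by
      have := Metric.tendsto_nhds.mp hlim 1 one_pos
      simpa [Real.dist_eq] using this
    rw [eventually_nhdsWithin_iff] at h1
    obtain ⟨ε, hε, hball⟩ := Metric.eventually_nhds_iff.mp h1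
    set t : ℝ := min (ε/2) (min (1/(6*M)) (1/(2*M*(|L|+1)))) with htdef
    have hL1 : (0:ℝ) < |L| + 1 := by positivity
    have ht0 : 0 < t := by
      apply lt_min (by linarith)
      apply lt_min (by positivity) (by positivity)
    have htε : dist t 0 < ε := by
      rw [Real.dist_eq, sub_zero, abs_of_pos ht0]
      calc t ≤ ε/2 := min_le_left _ _
        _ < ε := by linarith
    have htM : M * t ≤ 1/6 := by
      have h : t ≤ 1/(6*M) :=
        le_trans (min_le_right (ε/2) _) (min_le_left (1/(6*M)) (1/(2*M*(|L|+1))))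
      rw [le_div_iff₀ (by positivity : (0:ℝ) < 6*M)] at h
      linarith
    have htL : t * (2*M*(|L|+1)) ≤ 1 := by
      have h : t ≤ 1/(2*M*(|L|+1)) :=
        le_trans (min_le_right (ε/2) _) (min_le_right (1/(6*M)) (1/(2*M*(|L|+1))))
      rw [le_div_iff₀ (by positivity : (0:ℝ) < 2*M*(|L|+1))] at h
      linarith
    have hfab := hball htε ht0
    -- estimates at t
    obtain ⟨_, hPlo, _⟩ := estimates' P₁ hP₁M hM1 ht0 htM hp0
    obtain ⟨_, hQlo, hQhi⟩ := estimates' Q₁ hQ₁M hM1 ht0 htM hq0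
    set u := (aeval t P₁ : ℝ)
    set v := (aeval t Q₁ : ℝ)
    have hfeq : (aeval t P : ℝ) / (aeval t Q : ℝ) = u / (t ^ c * v) := by
      rw [hPev, hQev, hbc, pow_add, mul_assoc]
      exact mul_div_mul_left _ _ (pow_ne_zero _ ht0.ne')
    have ht1 : t ≤ 1 := by nlinarith
    have htc : t ^ c ≤ t := by
      calc t ^ c ≤ t ^ 1 := pow_le_pow_of_le_one ht0.le ht1 hc1
        _ = t := pow_one t
    have htc0 : 0 < t ^ c := pow_pos ht0 c
    have hden : t ^ c * v ≤ 6/5 * M * t ∧ 0 < t ^ c * |v| := by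
      constructor
      · calc t ^ c * v ≤ t ^ c * |v| := by
              apply mul_le_mul_of_nonneg_left (le_abs_self v) htc0.le
          _ ≤ t * (6/5 * M) := mul_le_mul htc hQhi (abs_nonneg v) (by linarith)
          _ = 6/5 * M * t := by ring
      · positivity
    have key : (4/5) / (6/5 * M * t) ≤ |u / (t ^ c * v)| := by
      rw [abs_div, abs_mul, abs_pow, abs_of_pos ht0]
      apply div_le_div₀ (abs_nonneg u) hPlo hden.2
      calc t ^ c * |v| ≤ t * (6/5 * M) := mul_le_mul htc hQhi (abs_nonneg v) (by linarith)
        _ = 6/5 * M * t := by ring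
    have hlow : |L| + 1 ≤ (4/5) / (6/5 * M * t) := by
      rw [le_div_iff₀ (by positivity : (0:ℝ) < 6/5 * M * t)]
      nlinarith
    have hupper : |u / (t ^ c * v)| < |L| + 1 := by
      rw [hfeq] at hfab
      have := abs_sub_abs_le_abs_sub (u / (t ^ c * v)) L
      linarith [abs_nonneg (u / (t ^ c * v) - L)]
    linarith
  · -- a = b : L = p₀/q₀
    subst hab
    have hqR : ((Q₁.coeff 0 : ℝ)) ≠ 0 := by exact_mod_cast hq0
    have heqev : ∀ x ∈ Set.Ioi (0:ℝ),
        (aeval x P₁ : ℝ) / (aeval x Q₁ : ℝ) = (aeval x P : ℝ) / (aeval x Q : ℝ) := by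
      intro x hx
      rw [hPev, hQev]
      exact (mul_div_mul_left _ _ (pow_ne_zero _ (ne_of_gt hx))).symm
    have hquot : Tendsto (fun x : ℝ => (aeval x P : ℝ) / (aeval x Q : ℝ))
        (nhdsWithin 0 (Set.Ioi 0)) (nhds ((P₁.coeff 0 : ℝ) / (Q₁.coeff 0 : ℝ))) := by
      apply Tendsto.congr' (eventually_nhdsWithin_of_forall heqev)
      exact (aeval_tendsto' P₁).div (aeval_tendsto' Q₁) hqR
    have hL : L = (P₁.coeff 0 : ℝ) / (Q₁.coeff 0 : ℝ) := tendsto_nhds_unique hlim hquot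
    intro t ht0 ht
    obtain ⟨htM, htMk⟩ := htfacts t ht0 ht
    obtain ⟨hPtail, hPlo, hPhi⟩ := estimates' P₁ hP₁M hM1 ht0 htM hp0
    obtain ⟨hQtail, hQlo, hQhi⟩ := estimates' Q₁ hQ₁M hM1 ht0 htM hq0
    set u := (aeval t P₁ : ℝ)
    set v := (aeval t Q₁ : ℝ)
    set p := ((P₁.coeff 0 : ℤ) : ℝ)
    set q := ((Q₁.coeff 0 : ℤ) : ℝ)
    have hv_ne : v ≠ 0 := by intro h; rw [h] at hQlo; simp at hQlo; linarith
    have hq1 : (1:ℝ) ≤ |q| := by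
      rw [← Int.cast_abs]; exact_mod_cast Int.one_le_abs hq0
    have hpM : |p| ≤ M := hP₁M 0
    have hqM : |q| ≤ M := hQ₁M 0
    have hfeq : (aeval t P : ℝ) / (aeval t Q : ℝ) = u / v :=
      (heqev t ht0).symm
    rw [hfeq, hL, div_sub_div u p hv_ne hqR, abs_div]
    have hnum : |u * q - v * p| ≤ 12/5 * (M^2 * t) := by
      have hrw : u * q - v * p = (u - p) * q - (v - q) * p := by ring
      rw [hrw]
      calc |(u - p) * q - (v - q) * p| ≤ |(u - p) * q| + |(v - q) * p| := abs_sub _ _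
        _ = |u - p| * |q| + |v - q| * |p| := by rw [abs_mul, abs_mul]
        _ ≤ (6/5 * (M * t)) * M + (6/5 * (M * t)) * M := by
            apply add_le_add
            · exact mul_le_mul hPtail hqM (abs_nonneg _) (by positivity)
            · exact mul_le_mul hQtail hpM (abs_nonneg _) (by positivity)
        _ = 12/5 * (M^2 * t) := by ring
    have hden : 4/5 ≤ |v * q| := by
      rw [abs_mul]
      calc (4/5 : ℝ) = 4/5 * 1 := by ring
        _ ≤ |v| * |q| := mul_le_mul hQlo hq1 (by norm_num) (abs_nonneg v)
    have hdenpos : (0:ℝ) < |v * q| := by linarith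
    rw [div_lt_div_iff₀ hdenpos hk0]
    have hnk := mul_le_mul_of_nonneg_right hnum hk0.le
    nlinarith
  · -- a > b : L = 0
    set c := a - b with hc
    have hbc : a = b + c := by omega
    have hc1 : 1 ≤ c := by omega
    have hqR : ((Q₁.coeff 0 : ℝ)) ≠ 0 := by exact_mod_cast hq0
    have heqev : ∀ x ∈ Set.Ioi (0:ℝ),
        x ^ c * ((aeval x P₁ : ℝ) / (aeval x Q₁ : ℝ)) = (aeval x P : ℝ) / (aeval x Q : ℝ) := by
      intro x hx
      rw [hPev, hQev, hbc, pow_add, mul_assoc]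
      rw [mul_div_mul_left _ _ (pow_ne_zero _ (ne_of_gt hx))]
      rw [mul_div_assoc]
    have hquot : Tendsto (fun x : ℝ => (aeval x P : ℝ) / (aeval x Q : ℝ))
        (nhdsWithin 0 (Set.Ioi 0)) (nhds 0) := by
      apply Tendsto.congr' (eventually_nhdsWithin_of_forall heqev)
      have h1 : Tendsto (fun x : ℝ => x ^ c) (nhdsWithin 0 (Set.Ioi 0)) (nhds 0) := by
        have := ((continuous_pow c).tendsto (0:ℝ)).mono_left
          (nhdsWithin_le_nhds (s := Set.Ioi 0))
        simpa [zero_pow (by omega : c ≠ 0)] using this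
      have h2 := ((aeval_tendsto' P₁).div (aeval_tendsto' Q₁) hqR)
      simpa using h1.mul h2
    have hL : L = 0 := tendsto_nhds_unique hlim hquot
    intro t ht0 ht
    obtain ⟨htM, htMk⟩ := htfacts t ht0 ht
    obtain ⟨_, hPlo, hPhi⟩ := estimates' P₁ hP₁M hM1 ht0 htM hp0
    obtain ⟨_, hQlo, hQhi⟩ := estimates' Q₁ hQ₁M hM1 ht0 htM hq0
    set u := (aeval t P₁ : ℝ)
    set v := (aeval t Q₁ : ℝ)
    have hfeq : (aeval t P : ℝ) / (aeval t Q : ℝ) = t ^ c * (u / v) :=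
      (heqev t ht0).symm
    rw [hL, hfeq, sub_zero, abs_mul, abs_pow, abs_of_pos ht0, abs_div]
    have ht1 : t ≤ 1 := by nlinarith
    have htc : t ^ c ≤ t := by
      calc t ^ c ≤ t ^ 1 := pow_le_pow_of_le_one ht0.le ht1 hc1
        _ = t := pow_one t
    have hdiv : |u| / |v| ≤ 3/2 * M := by
      rw [div_le_iff₀ (by linarith : (0:ℝ) < |v|)]
      nlinarith
    have := mul_le_mul htc hdiv (by positivity) (by linarith : (0:ℝ) ≤ t)
    calc t ^ c * (|u| / |v|) ≤ t * (3/2 * M) := this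
      _ < 1 / k := by
          rw [lt_div_iff₀ hk0]
          nlinarith [mul_le_mul_of_nonneg_left htMk (le_of_lt hM0),
            mul_pos ht0 hk0, mul_nonneg ht0.le hk0.le]
end Paper
end

section
/- Let G be a generalized Big Match game satisfying the stated assumptions, let T, i ≥ 1 be integers and 0 < ξ < 1, and let σ ∈ A2^T be an arbitrary prefix of a pure Markov strategy for Player 2. Consider the first T rounds where Player 1 follows τ1^{i,ξ} and Player 2 follows σ. Let S ∈ {1,…,T} ∪ {∞} be the round in which the game stops (∞ if it does not stop in the first T rounds), and let U be the outcome π(R,σ_S) if the game stops within the first T rounds and 0 otherwise. Then: (1) −E[U | U<0]·Pr[U<0] ≤ ξ³(1−ξ)^{i−K+1} + (1−ξ)^{1−2K}·E[U | U>0]·Pr[U>0]; (2) if gdens(σ^T) ≤ −i·2K/T then Pr[S < ∞] ≥ ξ⁴·ω, where ω = min_{a2} ω(R,a2). -/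
open Filter

noncomputable section

namespace Paper

/-! ### Generalized Big Match games -/

/-- A generalized Big Match game: Player 1 has the two actions `L` and `R`,
Player 2 has the actions `Fin (n+1)`; `payL a` and `payR a` are the stage
payoffs `π(L,a)` and `π(R,a)`; when Player 1 plays `R` against `a`, the game
stops with probability `stopR a > 0` (the game never stops when Player 1
plays `L`). -/
structure GBM (n : ℕ) where
  payL : Fin (n + 1) → ℝ
  payR : Fin (n + 1) → ℝ
  stopR : Fin (n + 1) → ℝ
  stopR_pos : ∀ a, 0 < stopR a
  stopR_le_one : ∀ a, stopR a ≤ 1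

variable {n : ℕ}

/-- The `R`-row of the derived matrix game `G̃`: `G̃(R,a) = ω(R,a)·π(R,a)`.
(The `L`-row is `G̃(L,a) = π(L,a) = payL a`.) -/
def GBM.rowR (G : GBM n) (a : Fin (n + 1)) : ℝ := G.stopR a * G.payR a

/-- The value (in mixed strategies) of the derived matrix game `G̃`, where `p`
is the probability with which Player 1 plays the row `L`. -/
def matVal (G : GBM n) : ℝ :=
  ⨆ p : Set.Icc (0 : ℝ) 1, ⨅ a : Fin (n + 1),
    ((p : ℝ) * G.payL a + (1 - (p : ℝ)) * G.rowR a)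

/-- All entries of the derived matrix game `G̃` are integers. -/
def GBM.IntEntries (G : GBM n) : Prop :=
  ∀ a, (∃ z : ℤ, G.payL a = (z : ℝ)) ∧ (∃ z : ℤ, G.rowR a = (z : ℝ))

/-- Player 1 has no pure optimal strategy in the derived matrix game `G̃`:
each of the two rows has an entry strictly below the value. -/
def GBM.NoPureOptimal (G : GBM n) : Prop :=
  (∃ a, G.payL a < matVal G) ∧ (∃ a, G.rowR a < matVal G)

/-- `K`, the maximum magnitude of an entry of the derived matrix game `G̃`. -/
def gbmK (G : GBM n) : ℝ :=
  Finset.univ.sup' Finset.univ_nonempty fun a : Fin (n + 1) =>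
    max |G.payL a| |G.rowR a|

/-- `ω`, the minimum (nonzero) stopping probability of `G`. -/
def gbmOmega (G : GBM n) : ℝ := Finset.univ.inf' Finset.univ_nonempty G.stopR

/-- The generalized density of the length-`T` prefix of the pure Markov
strategy `σ` of Player 2: `gdens(σ^T) = (1/T) ∑_{i<T} π(L, σ_i)`. -/
def gdens (G : GBM n) (σ : ℕ → Fin (n + 1)) (T : ℕ) : ℝ :=
  (∑ t ∈ Finset.range T, G.payL (σ t)) / T

/-- The counter used as memory by the base strategy `τ1^{i,ξ}` at round `t`,
against the fixed sequence `σ` of actions of Player 2: after Player 2 plays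
`a`, the counter is updated by `j ↦ j - G̃(R,a)`. -/
def tauCounter (G : GBM n) (σ : ℕ → Fin (n + 1)) (t : ℕ) : ℝ :=
  -∑ s ∈ Finset.range t, G.rowR (σ s)

/-- The probability with which the base strategy `τ1^{i,ξ}` plays `R` at round
`t`: if the counter equals `j`, this is `ξ⁴ (1-ξ)^(i+j)` when `i + j > 0` and
`ξ⁴` when `i + j ≤ 0`. -/
def tauRProb (G : GBM n) (ξ : ℝ) (i : ℕ) (σ : ℕ → Fin (n + 1)) (t : ℕ) : ℝ :=
  if 0 < (i : ℝ) + tauCounter G σ t then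
    ξ ^ 4 * (1 - ξ) ^ ((i : ℝ) + tauCounter G σ t)
  else ξ ^ 4

/-- The probability that the game stops at round `t` given that it has not
stopped earlier: Player 1 plays `R` and the stopping lottery succeeds. -/
def tauStopProb (G : GBM n) (ξ : ℝ) (i : ℕ) (σ : ℕ → Fin (n + 1)) (t : ℕ) : ℝ :=
  tauRProb G ξ i σ t * G.stopR (σ t)

/-- The (unconditional) probability that the game stops exactly at round `t`. -/
def tauPStop (G : GBM n) (ξ : ℝ) (i : ℕ) (σ : ℕ → Fin (n + 1)) (t : ℕ) : ℝ :=
  tauStopProb G ξ i σ t * ∏ s ∈ Finset.range t, (1 - tauStopProb G ξ i σ s)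

/-! Part (1) is a potential argument for the level `x = i + j` of the counter. Put
`Φ(x) = (1-ξ)^{x⁺} + ξ (1-ξ)^{K-1} x⁻`. A round with `G̃(R,σ_t) = -m < 0` raises the level by
`m ≤ K` and lowers `Φ` by at least `ξ (1-ξ)^{K-1} (1-ξ)^{x⁺} m`; a round with `G̃(R,σ_t) = m > 0`
raises `Φ` by at most `ξ (1-ξ)^{x⁺-K} m`. As `R` is played at level `x` with probability
`ξ⁴ (1-ξ)^{x⁺}`, the contribution `ξ⁴ (1-ξ)^{x⁺} G̃(R,σ_t)` of a round to `E[U]` (weighted by the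
survival probability) is thus compared with `ξ³ (1-ξ)^{1-K}` times the drop of `Φ`. The survival
probabilities decrease, so by Abel summation the total weighted drop is at most `Φ(i) = (1-ξ)^i`.

Part (2): because neither row of `G̃` is optimal and its entries are integers, an optimal mix
plays `L` with probability `p < 1` and `1 - p ≤ p K`. Over the first `T - 1` rounds, optimality
and the density bound force the `R`-row entries to sum to at least `i`, so the level in round `T`
is nonpositive and `R` is played there with probability `ξ⁴`.
-/

open Finset

lemma sum_mul_sub_succ_le {w F : ℕ → ℝ} (hw0 : ∀ t, 0 ≤ w t) (hw : Antitone w)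
    (hF : ∀ t, 0 ≤ F t) (T : ℕ) :
    ∑ t ∈ range T, w t * (F t - F (t + 1)) ≤ w 0 * F 0 :=
  calc ∑ t ∈ range T, w t * (F t - F (t + 1))
      ≤ ∑ t ∈ range T, (w t * F t - w (t + 1) * F (t + 1)) :=
        sum_le_sum fun t _ => by nlinarith [mul_le_mul_of_nonneg_right (hw t.le_succ) (hF (t + 1))]
    _ = w 0 * F 0 - w T * F T := sum_range_sub' (fun t => w t * F t) T
    _ ≤ w 0 * F 0 := sub_le_self _ (mul_nonneg (hw0 T) (hF T))

lemma sum_eq_sum_filter_neg_add_sum_filter_pos {ι : Type*} {s : Finset ι} {g : ι → ℤ}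
    {f : ι → ℝ} (hf : ∀ t ∈ s, g t = 0 → f t = 0) :
    ∑ t ∈ s, f t = ∑ t ∈ s with g t < 0, f t + ∑ t ∈ s with 0 < g t, f t := by
  rw [← sum_filter_add_sum_filter_not s (fun t => g t < 0)]
  congr 1
  refine (sum_subset (fun t ht => ?_) (fun t ht hnt => ?_)).symm
  · simp only [mem_filter] at ht ⊢
    exact ⟨ht.1, by omega⟩
  · simp only [mem_filter, not_and, not_lt] at ht hnt
    exact hf t ht.1 (by have := hnt ht.1; omega)

lemma antitone_prod_range_one_sub {a : ℕ → ℝ} (h0 : ∀ t, 0 ≤ a t) (h1 : ∀ t, a t ≤ 1) :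
    Antitone fun t => ∏ s ∈ range t, (1 - a s) := fun _ _ htt' =>
  prod_le_prod_of_subset_of_le_one (range_subset_range.mpr htt')
    (fun s _ => sub_nonneg.mpr (h1 s)) (fun s _ _ => sub_le_self _ (h0 s))

lemma le_one_sub_prod_range_one_sub {a : ℕ → ℝ} (h0 : ∀ t, 0 ≤ a t) (h1 : ∀ t, a t ≤ 1)
    {t T : ℕ} (ht : t < T) : a t ≤ 1 - ∏ s ∈ range T, (1 - a s) := by
  have := prod_le_prod_of_subset_of_le_one (singleton_subset_iff.mpr (mem_range.mpr ht))
    (fun s _ => sub_nonneg.mpr (h1 s)) (fun s _ _ => sub_le_self _ (h0 s))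
  rw [prod_singleton] at this
  linarith

def potential (ξ : ℝ) (k x : ℤ) : ℝ :=
  (1 - ξ) ^ max x 0 + ξ * (1 - ξ) ^ (k - 1) * (max (-x) 0 : ℤ)

section Potential

variable {ξ : ℝ} {k : ℤ}

lemma potential_nonneg (hξ0 : 0 ≤ ξ) (hξ1 : ξ ≤ 1) (x : ℤ) : 0 ≤ potential ξ k x := by
  have : (0 : ℝ) ≤ (max (-x) 0 : ℤ) := by exact_mod_cast le_max_right _ _
  have : 0 ≤ 1 - ξ := by linarith
  unfold potential
  positivity

lemma potential_of_nonneg {x : ℤ} (hx : 0 ≤ x) : potential ξ k x = (1 - ξ) ^ x := by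
  simp [potential, hx]

lemma potential_sub_potential_succ_of_nonneg (hξ1 : ξ < 1) {y : ℤ} (hy : 0 ≤ y) :
    potential ξ k y - potential ξ k (y + 1) = ξ * (1 - ξ) ^ y := by
  rw [potential_of_nonneg hy, potential_of_nonneg (by omega), zpow_add_one₀ (by linarith)]
  ring

lemma potential_sub_potential_succ_of_neg {y : ℤ} (hy : y < 0) :
    potential ξ k y - potential ξ k (y + 1) = ξ * (1 - ξ) ^ (k - 1) := by
  simp only [potential, max_eq_right hy.le, max_eq_right (show y + 1 ≤ 0 by omega),
    max_eq_left (show (0 : ℤ) ≤ -y by omega), max_eq_left (show (0 : ℤ) ≤ -(y + 1) by omega)]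
  push_cast
  ring

lemma potential_sub_potential_succ_ge (hξ0 : 0 < ξ) (hξ1 : ξ < 1) {x y : ℤ} (hyk : y < x + k) :
    ξ * (1 - ξ) ^ (k - 1) * (1 - ξ) ^ max x 0 ≤ potential ξ k y - potential ξ k (y + 1) := by
  have hb : 0 < 1 - ξ := by linarith
  have hb1 : 1 - ξ ≤ 1 := by linarith
  rcases lt_or_ge y 0 with hy | hy
  · rw [potential_sub_potential_succ_of_neg hy, mul_assoc]
    exact mul_le_mul_of_nonneg_left
      (mul_le_of_le_one_right (by positivity) (zpow_le_one₀ hb hb1 (le_max_right _ _))) hξ0.le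
  · rw [potential_sub_potential_succ_of_nonneg hξ1 hy, mul_assoc, ← zpow_add₀ hb.ne']
    exact mul_le_mul_of_nonneg_left (zpow_le_zpow_right_of_le_one₀ hb hb1 (by omega)) hξ0.le

lemma potential_sub_potential_succ_le (hξ0 : 0 < ξ) (hξ1 : ξ < 1) {x y : ℤ}
    (hxy : x - k ≤ y) (hyx : y < x) :
    potential ξ k y - potential ξ k (y + 1) ≤ ξ * (1 - ξ) ^ (max x 0 - k) := by
  have hb : 0 < 1 - ξ := by linarith
  have hb1 : 1 - ξ ≤ 1 := by linarith
  rcases lt_or_ge y 0 with hy | hy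
  · rw [potential_sub_potential_succ_of_neg hy]
    exact mul_le_mul_of_nonneg_left (zpow_le_zpow_right_of_le_one₀ hb hb1 (by omega)) hξ0.le
  · rw [potential_sub_potential_succ_of_nonneg hξ1 hy]
    exact mul_le_mul_of_nonneg_left (zpow_le_zpow_right_of_le_one₀ hb hb1 (by omega)) hξ0.le

lemma potential_sub_potential_add_ge (hξ0 : 0 < ξ) (hξ1 : ξ < 1) (x : ℤ) {m : ℕ}
    (hm : (m : ℤ) ≤ k) :
    m * (ξ * (1 - ξ) ^ (k - 1) * (1 - ξ) ^ max x 0) ≤ potential ξ k x - potential ξ k (x + m) := by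
  have h := card_nsmul_le_sum (range m)
    (fun j => potential ξ k (x + j) - potential ξ k (x + j + 1)) _
    fun j hj => potential_sub_potential_succ_ge hξ0 hξ1 (x := x) (y := x + j)
      (by have := mem_range.mp hj; omega)
  have ht := sum_range_sub' (fun j : ℕ => potential ξ k (x + j)) m
  simp only [card_range, nsmul_eq_mul, Nat.cast_add, Nat.cast_one, Nat.cast_zero, add_zero] at h ht
  simpa only [add_assoc, ht] using h

lemma potential_sub_sub_potential_le (hξ0 : 0 < ξ) (hξ1 : ξ < 1) (x : ℤ) {m : ℕ}
    (hm : (m : ℤ) ≤ k) :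
    potential ξ k (x - m) - potential ξ k x ≤ m * (ξ * (1 - ξ) ^ (max x 0 - k)) := by
  have h := sum_le_card_nsmul (range m)
    (fun j => potential ξ k (x - m + j) - potential ξ k (x - m + j + 1)) _
    fun j hj => potential_sub_potential_succ_le hξ0 hξ1 (x := x) (y := x - m + j) (by omega)
      (by have := mem_range.mp hj; omega)
  have ht := sum_range_sub' (fun j : ℕ => potential ξ k (x - m + j)) m
  simp only [card_range, nsmul_eq_mul, Nat.cast_add, Nat.cast_one, Nat.cast_zero, add_zero,
    sub_add_cancel] at h ht
  simpa only [add_assoc, ht] using h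

lemma neg_payoff_le_potential_drop (hξ0 : 0 < ξ) (hξ1 : ξ < 1) (x : ℤ) {g : ℤ} (hg : g < 0)
    (hgk : -g ≤ k) :
    -(ξ ^ 4 * (1 - ξ) ^ max x 0 * g) ≤
      ξ ^ 3 * (1 - ξ) ^ (1 - k) * (potential ξ k x - potential ξ k (x - g)) := by
  obtain ⟨m, rfl⟩ : ∃ m : ℕ, g = -m := ⟨g.natAbs, by omega⟩
  have hb : (1 - ξ) ^ (1 - k) * (1 - ξ) ^ (k - 1) = 1 := by
    rw [← zpow_add₀ (by linarith)]; simp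
  have hdrop := potential_sub_potential_add_ge hξ0 hξ1 x (k := k) (m := m) (by omega)
  calc -(ξ ^ 4 * (1 - ξ) ^ max x 0 * ((-m : ℤ) : ℝ))
      = ξ ^ 3 * (1 - ξ) ^ (1 - k) * (m * (ξ * (1 - ξ) ^ (k - 1) * (1 - ξ) ^ max x 0)) := by
        push_cast; linear_combination (-(ξ ^ 4 * (1 - ξ) ^ max x 0 * m)) * hb
    _ ≤ _ := by
        rw [sub_neg_eq_add]
        exact mul_le_mul_of_nonneg_left hdrop
          (mul_nonneg (by positivity) (zpow_nonneg (by linarith) _))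

lemma potential_rise_le_pos_payoff (hξ0 : 0 < ξ) (hξ1 : ξ < 1) (x : ℤ) {g : ℤ} (hg : 0 < g)
    (hgk : g ≤ k) :
    ξ ^ 3 * (1 - ξ) ^ (1 - k) * (potential ξ k (x - g) - potential ξ k x) ≤
      (1 - ξ) ^ (1 - 2 * k) * (ξ ^ 4 * (1 - ξ) ^ max x 0 * g) := by
  obtain ⟨m, rfl⟩ : ∃ m : ℕ, g = m := ⟨g.natAbs, by omega⟩
  have hb : (1 - ξ) ^ (1 - k) * (1 - ξ) ^ (max x 0 - k) =
      (1 - ξ) ^ (1 - 2 * k) * (1 - ξ) ^ max x 0 := by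
    rw [← zpow_add₀ (by linarith), ← zpow_add₀ (by linarith)]; ring_nf
  have hrise := potential_sub_sub_potential_le hξ0 hξ1 x (k := k) (m := m) hgk
  calc ξ ^ 3 * (1 - ξ) ^ (1 - k) * (potential ξ k (x - (m : ℤ)) - potential ξ k x)
      ≤ ξ ^ 3 * (1 - ξ) ^ (1 - k) * (m * (ξ * (1 - ξ) ^ (max x 0 - k))) :=
        mul_le_mul_of_nonneg_left hrise (mul_nonneg (by positivity) (zpow_nonneg (by linarith) _))
    _ = _ := by push_cast; linear_combination (ξ ^ 4 * m) * hb

theorem neg_payoff_le (hξ0 : 0 < ξ) (hξ1 : ξ < 1) {g x : ℕ → ℤ}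
    (hgk : ∀ t, |g t| ≤ k) (hx : ∀ t, x (t + 1) = x t - g t) (hx0 : 0 ≤ x 0)
    {w : ℕ → ℝ} (hw0 : ∀ t, 0 ≤ w t) (hw : Antitone w) (hw1 : w 0 ≤ 1) (T : ℕ) :
    -(∑ t ∈ range T with g t < 0, w t * (ξ ^ 4 * (1 - ξ) ^ max (x t) 0) * g t) ≤
      ξ ^ 3 * (1 - ξ) ^ (x 0 - k + 1) +
        (1 - ξ) ^ (1 - 2 * k) *
          ∑ t ∈ range T with 0 < g t, w t * (ξ ^ 4 * (1 - ξ) ^ max (x t) 0) * g t := by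
  set Φ : ℕ → ℝ := fun t => potential ξ k (x t)
  set C := ξ ^ 3 * (1 - ξ) ^ (1 - k)
  have hb : 0 < 1 - ξ := by linarith
  have hneg : ∀ t, g t < 0 →
      -(w t * (ξ ^ 4 * (1 - ξ) ^ max (x t) 0) * g t) ≤ C * (w t * (Φ t - Φ (t + 1))) := by
    intro t ht
    have h := neg_payoff_le_potential_drop hξ0 hξ1 (x t) ht
      (neg_le.mp (abs_le.mp (hgk t)).1)
    rw [← hx] at h
    linear_combination mul_le_mul_of_nonneg_left h (hw0 t)
  have hpos : ∀ t, 0 < g t →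
      C * (w t * -(Φ t - Φ (t + 1))) ≤
        (1 - ξ) ^ (1 - 2 * k) * (w t * (ξ ^ 4 * (1 - ξ) ^ max (x t) 0) * g t) := by
    intro t ht
    have h := potential_rise_le_pos_payoff hξ0 hξ1 (x t) ht
      (abs_le.mp (hgk t)).2
    rw [← hx] at h
    linear_combination mul_le_mul_of_nonneg_left h (hw0 t)
  have hsplit := sum_eq_sum_filter_neg_add_sum_filter_pos (s := range T) (g := g)
    (f := fun t => w t * (Φ t - Φ (t + 1))) fun t _ ht => by simp [Φ, hx, ht]
  have habel : ∑ t ∈ range T, w t * (Φ t - Φ (t + 1)) ≤ (1 - ξ) ^ x 0 := by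
    refine (sum_mul_sub_succ_le hw0 hw (fun t => potential_nonneg hξ0.le hξ1.le _) T).trans ?_
    rw [potential_of_nonneg hx0]
    exact mul_le_of_le_one_left (by positivity) hw1
  have hC : C * (1 - ξ) ^ x 0 = ξ ^ 3 * (1 - ξ) ^ (x 0 - k + 1) := by
    rw [mul_assoc, ← zpow_add₀ hb.ne']; ring_nf
  calc -(∑ t ∈ range T with g t < 0, w t * (ξ ^ 4 * (1 - ξ) ^ max (x t) 0) * g t)
      ≤ ∑ t ∈ range T with g t < 0, C * (w t * (Φ t - Φ (t + 1))) := by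
        rw [← sum_neg_distrib]; exact sum_le_sum fun t ht => hneg t (mem_filter.mp ht).2
    _ = C * ∑ t ∈ range T, w t * (Φ t - Φ (t + 1)) +
          ∑ t ∈ range T with 0 < g t, C * (w t * -(Φ t - Φ (t + 1))) := by
        simp only [hsplit, ← mul_sum, mul_neg, sum_neg_distrib]; ring
    _ ≤ C * (1 - ξ) ^ x 0 + ∑ t ∈ range T with 0 < g t,
          (1 - ξ) ^ (1 - 2 * k) * (w t * (ξ ^ 4 * (1 - ξ) ^ max (x t) 0) * g t) :=
        add_le_add (mul_le_mul_of_nonneg_left habel (by positivity))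
          (sum_le_sum fun t ht => hpos t (mem_filter.mp ht).2)
    _ = _ := by rw [hC, mul_sum]

end Potential

lemma GBM.abs_payL_le_gbmK (G : GBM n) (a : Fin (n + 1)) : |G.payL a| ≤ gbmK G :=
  (le_max_left _ _).trans (le_sup' (fun a => max |G.payL a| |G.rowR a|) (mem_univ a))

lemma GBM.abs_rowR_le_gbmK (G : GBM n) (a : Fin (n + 1)) : |G.rowR a| ≤ gbmK G :=
  (le_max_right _ _).trans (le_sup' (fun a => max |G.payL a| |G.rowR a|) (mem_univ a))

lemma GBM.rowR_neg_iff (G : GBM n) (a : Fin (n + 1)) : G.rowR a < 0 ↔ G.payR a < 0 := by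
  simp [GBM.rowR, mul_neg_iff, G.stopR_pos a, (G.stopR_pos a).not_gt]

lemma GBM.rowR_pos_iff (G : GBM n) (a : Fin (n + 1)) : 0 < G.rowR a ↔ 0 < G.payR a :=
  mul_pos_iff_of_pos_left (G.stopR_pos a)

lemma GBM.exists_optimal_mix (G : GBM n) :
    ∃ p ∈ Set.Icc (0 : ℝ) 1, ∀ a, matVal G ≤ p * G.payL a + (1 - p) * G.rowR a := by
  set f : ℝ → ℝ := fun p => ⨅ a, (p * G.payL a + (1 - p) * G.rowR a)
  have hf : Continuous f := by
    simp only [f, ← inf'_univ_eq_ciInf]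
    exact Continuous.finset_inf'_apply _ fun a _ => by fun_prop
  obtain ⟨p, hp, hmax⟩ :=
    isCompact_Icc.exists_isMaxOn (Set.nonempty_Icc.mpr zero_le_one) hf.continuousOn
  have hval : matVal G = f p :=
    le_antisymm (ciSup_le fun q => hmax q.2)
      (le_ciSup (f := fun q : Set.Icc (0 : ℝ) 1 => f q)
        ⟨f p, by rintro y ⟨q, rfl⟩; exact hmax q.2⟩ ⟨p, hp⟩)
  exact ⟨p, hp, fun a => hval ▸ ciInf_le (Finite.bddBelow_range _) a⟩

lemma GBM.rowR_le_neg_one (G : GBM n) (hInt : G.IntEntries) {a : Fin (n + 1)}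
    (ha : G.rowR a < 0) : G.rowR a ≤ -1 := by
  obtain ⟨z, hz⟩ := (hInt a).2
  rw [hz] at ha ⊢
  have : z < 0 := by exact_mod_cast ha
  exact_mod_cast (show z ≤ -1 by omega)

lemma GBM.exists_optimal_mix_of_noPureOptimal (G : GBM n) (hInt : G.IntEntries)
    (hVal : matVal G = 0) (hPure : G.NoPureOptimal) :
    ∃ p : ℝ, 0 ≤ p ∧ p < 1 ∧ 1 - p ≤ p * gbmK G ∧
      ∀ a, 0 ≤ p * G.payL a + (1 - p) * G.rowR a := by
  obtain ⟨p, ⟨hp0, hp1⟩, hopt⟩ := G.exists_optimal_mix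
  obtain ⟨⟨aL, haL⟩, ⟨aR, haR⟩⟩ := hPure
  rw [hVal] at hopt haL haR
  have hp1' : p < 1 := hp1.lt_of_ne fun h => by have := hopt aL; rw [h] at this; linarith
  have hR := G.rowR_le_neg_one hInt haR
  have hL := (abs_le.mp (G.abs_payL_le_gbmK aR)).2
  refine ⟨p, hp0, hp1', ?_, hopt⟩
  nlinarith [hopt aR]

lemma GBM.le_sum_rowR_of_sum_payL_le (G : GBM n) (hInt : G.IntEntries) (hVal : matVal G = 0)
    (hPure : G.NoPureOptimal) {ι : Type*} (s : Finset ι) (σ : ι → Fin (n + 1)) {i : ℝ}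
    (hi : 1 ≤ i) (hs : ∑ t ∈ s, G.payL (σ t) ≤ -(2 * i - 1) * gbmK G) :
    i ≤ ∑ t ∈ s, G.rowR (σ t) := by
  obtain ⟨p, hp0, hp1, hpK, hopt⟩ := G.exists_optimal_mix_of_noPureOptimal hInt hVal hPure
  have hsum : 0 ≤ p * ∑ t ∈ s, G.payL (σ t) + (1 - p) * ∑ t ∈ s, G.rowR (σ t) := by
    rw [mul_sum, mul_sum, ← sum_add_distrib]
    exact sum_nonneg fun t _ => hopt (σ t)
  refine le_of_mul_le_mul_left ?_ (sub_pos.mpr hp1)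
  calc (1 - p) * i ≤ (1 - p) * (2 * i - 1) :=
        mul_le_mul_of_nonneg_left (by linarith) (sub_nonneg.mpr hp1.le)
    _ ≤ p * gbmK G * (2 * i - 1) := mul_le_mul_of_nonneg_right hpK (by linarith)
    _ ≤ -(p * ∑ t ∈ s, G.payL (σ t)) := by linarith [mul_le_mul_of_nonneg_left hs hp0]
    _ ≤ (1 - p) * ∑ t ∈ s, G.rowR (σ t) := by linarith

lemma add_tauCounter_nonpos_of_gdens_le (G : GBM n) (hInt : G.IntEntries)
    (hVal : matVal G = 0) (hPure : G.NoPureOptimal) {T i : ℕ} (hT : 1 ≤ T) (hi : 1 ≤ i)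
    (σ : ℕ → Fin (n + 1)) (hdens : gdens G σ T ≤ -(i : ℝ) * (2 * gbmK G) / T) :
    (i : ℝ) + tauCounter G σ (T - 1) ≤ 0 := by
  have hT0 : (0 : ℝ) < T := by exact_mod_cast hT
  rw [gdens, div_le_div_iff_of_pos_right hT0] at hdens
  obtain ⟨s, rfl⟩ : ∃ s, T = s + 1 := ⟨T - 1, by omega⟩
  rw [sum_range_succ] at hdens
  have hlast := (abs_le.mp (G.abs_payL_le_gbmK (σ s))).1
  have := G.le_sum_rowR_of_sum_payL_le hInt hVal hPure (range s) σ (i := i)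
    (by exact_mod_cast hi) (by linarith)
  rw [Nat.add_sub_cancel, tauCounter]
  linarith

section BaseStrategy

variable (G : GBM n) {ξ : ℝ} (i : ℕ) (σ : ℕ → Fin (n + 1)) (t : ℕ)

lemma tauRProb_nonneg (hξ1 : ξ ≤ 1) : 0 ≤ tauRProb G ξ i σ t := by
  unfold tauRProb
  split_ifs
  · exact mul_nonneg (by positivity) (Real.rpow_nonneg (by linarith) _)
  · positivity

lemma tauRProb_le (hξ0 : 0 ≤ ξ) (hξ1 : ξ ≤ 1) : tauRProb G ξ i σ t ≤ ξ ^ 4 := by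
  unfold tauRProb
  split_ifs with h
  · exact mul_le_of_le_one_right (by positivity) (Real.rpow_le_one (by linarith) (by linarith) h.le)
  · rfl

lemma tauStopProb_nonneg (hξ1 : ξ ≤ 1) : 0 ≤ tauStopProb G ξ i σ t :=
  mul_nonneg (tauRProb_nonneg G i σ t hξ1) (G.stopR_pos _).le

lemma tauStopProb_le_one (hξ0 : 0 ≤ ξ) (hξ1 : ξ ≤ 1) : tauStopProb G ξ i σ t ≤ 1 :=
  mul_le_one₀ ((tauRProb_le G i σ t hξ0 hξ1).trans (pow_le_one₀ hξ0 hξ1))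
    (G.stopR_pos _).le (G.stopR_le_one _)

lemma tauRProb_eq_of_level {y : ℤ} (hy : (i : ℝ) + tauCounter G σ t = y) :
    tauRProb G ξ i σ t = ξ ^ 4 * (1 - ξ) ^ max y 0 := by
  unfold tauRProb
  rw [hy]
  split_ifs with h
  · rw [max_eq_left (by exact_mod_cast h.le), Real.rpow_intCast]
  · rw [max_eq_right (by exact_mod_cast not_lt.mp h), zpow_zero, mul_one]

lemma tauStopProb_ge_of_level_nonpos (hy : (i : ℝ) + tauCounter G σ t ≤ 0) :
    ξ ^ 4 * gbmOmega G ≤ tauStopProb G ξ i σ t := by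
  rw [tauStopProb, tauRProb, if_neg hy.not_gt]
  exact mul_le_mul_of_nonneg_left (inf'_le _ (mem_univ _)) (by positivity)

end BaseStrategy

theorem tau_neg_payoff_le (G : GBM n) (hInt : G.IntEntries) {K : ℤ} (hK : (K : ℝ) = gbmK G)
    {ξ : ℝ} (hξ0 : 0 < ξ) (hξ1 : ξ < 1) (i T : ℕ) (σ : ℕ → Fin (n + 1)) :
    -(∑ t ∈ range T with G.payR (σ t) < 0, tauPStop G ξ i σ t * G.payR (σ t)) ≤
      ξ ^ 3 * (1 - ξ) ^ ((i : ℤ) - K + 1) +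
        (1 - ξ) ^ ((1 : ℤ) - 2 * K) *
          ∑ t ∈ range T with 0 < G.payR (σ t), tauPStop G ξ i σ t * G.payR (σ t) := by
  choose z hz using fun a => (hInt a).2
  have hzK : ∀ a, |z a| ≤ K := fun a => by
    have := G.abs_rowR_le_gbmK a
    rw [hz, ← hK] at this
    exact_mod_cast this
  set x : ℕ → ℤ := fun t => i - ∑ s ∈ range t, z (σ s)
  have hx0 : x 0 = i := by simp [x]
  have hxsucc : ∀ t, x (t + 1) = x t - z (σ t) := fun t => by simp only [x, sum_range_succ]; ring
  have hlevel : ∀ t, (i : ℝ) + tauCounter G σ t = x t := fun t => by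
    simp [x, tauCounter, hz]; ring
  have hstop0 := fun t => tauStopProb_nonneg G i σ t hξ1.le
  have hstop1 := fun t => tauStopProb_le_one G i σ t hξ0.le hξ1.le
  have hsummand : ∀ t, tauPStop G ξ i σ t * G.payR (σ t) =
      (∏ s ∈ range t, (1 - tauStopProb G ξ i σ s)) * (ξ ^ 4 * (1 - ξ) ^ max (x t) 0) * z (σ t) :=
    fun t => by
      rw [tauPStop, tauStopProb, tauRProb_eq_of_level G i σ t (hlevel t), ← hz, GBM.rowR]; ring
  simp_rw [hsummand, ← G.rowR_neg_iff, ← G.rowR_pos_iff, hz, Int.cast_lt_zero, Int.cast_pos]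
  have := neg_payoff_le hξ0 hξ1 (fun t => hzK (σ t)) hxsucc (by omega) (fun t => prod_nonneg
    fun s _ => sub_nonneg.mpr (hstop1 s)) (antitone_prod_range_one_sub hstop0 hstop1) (by simp) T
  rwa [hx0] at this

/-- properties of the base strategy `τ1^{i,ξ}`.  Let `G` be
a generalized Big Match game whose derived matrix game has integer entries,
value `0` and no pure optimal strategy for Player 1, with `K` the maximum
magnitude of an entry.  Let `T, i ≥ 1`, `0 < ξ < 1`, and let `σ` be an
arbitrary length-`T` prefix of a pure Markov strategy of Player 2.  With `U`
the outcome if the game stops within the first `T` rounds (and `0` otherwise):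
(1) `-E[U | U<0]·Pr[U<0] ≤ ξ³(1-ξ)^{i-K+1} + (1-ξ)^{1-2K}·E[U | U>0]·Pr[U>0]`;
(2) if `gdens(σ^T) ≤ -i·2K/T` then `Pr[S < ∞] ≥ ξ⁴·ω`. -/
theorem stmt17 (n : ℕ) (G : GBM n) (hInt : G.IntEntries) (hVal : matVal G = 0)
    (hPure : G.NoPureOptimal) (K : ℤ) (hK : (K : ℝ) = gbmK G)
    (T i : ℕ) (hT : 1 ≤ T) (hi : 1 ≤ i) (ξ : ℝ) (hξ0 : 0 < ξ) (hξ1 : ξ < 1)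
    (σ : ℕ → Fin (n + 1)) :
    (-(∑ t ∈ (Finset.range T).filter (fun t => G.payR (σ t) < 0),
          tauPStop G ξ i σ t * G.payR (σ t)) ≤
        ξ ^ 3 * (1 - ξ) ^ ((i : ℤ) - K + 1) +
          (1 - ξ) ^ ((1 : ℤ) - 2 * K) *
            ∑ t ∈ (Finset.range T).filter (fun t => 0 < G.payR (σ t)),
              tauPStop G ξ i σ t * G.payR (σ t)) ∧
    (gdens G σ T ≤ -(i : ℝ) * (2 * (K : ℝ)) / T →
      ξ ^ 4 * gbmOmega G ≤ 1 - ∏ t ∈ Finset.range T, (1 - tauStopProb G ξ i σ t)) := by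
  refine ⟨tau_neg_payoff_le G hInt hK hξ0 hξ1 i T σ, fun hdens => ?_⟩
  rw [hK] at hdens
  have hlevel := add_tauCounter_nonpos_of_gdens_le G hInt hVal hPure hT hi σ hdens
  calc ξ ^ 4 * gbmOmega G ≤ tauStopProb G ξ i σ (T - 1) :=
        tauStopProb_ge_of_level_nonpos G i σ _ hlevel
    _ ≤ 1 - ∏ t ∈ range T, (1 - tauStopProb G ξ i σ t) :=
        le_one_sub_prod_range_one_sub (fun t => tauStopProb_nonneg G i σ t hξ1.le)
          (fun t => tauStopProb_le_one G i σ t hξ0.le hξ1.le) (by omega)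

end Paper
end
end
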